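/- arXiv:2404.12230 — 3 statements merged into one kernel-verified Lean document; each statement's English description precedes it below -/
import Mathlib

section
/- Let g : ℝ → ℂ be a 2π-periodic essentially bounded measurable function and define f(k) = (1/(2π)) ∫₀^{2π} g(t) e^{-ikt} dt for k ∈ ℕ, k ≥ 1. Then for every n ∈ ℕ, the operator 2-norm of the n × n Hankel matrix H with entries H_{ij} = f(i+j-1) satisfies ‖H‖₂ ≤ esssup_{t ∈ ℝ} |g(t)|. -/
/-!
Since `e^{-i(i+j+1)t} = e^{-iit} e^{-ijt} e^{-it}`, the bilinear form of the Hankel matrix is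
`⟨a, H b⟩ = (1/2π) ∫₀^{2π} P_a(t) P_b(t) e^{-it} g(t) dt`, where `P_c` is the trigonometric
polynomial with coefficients `c`. Bounding `|g|` by its essential supremum `M` and `|P_a P_b|` by
`(|P_a|² + |P_b|²)/2`, Parseval's identity gives `|⟨a, H b⟩| ≤ M (‖a‖² + ‖b‖²)/2`, which is at
most `M` for unit vectors.
-/

open MeasureTheory Real Complex
open scoped ComplexConjugate Matrix

noncomputable def trigPoly {n : ℕ} (c : Fin n → ℂ) (t : ℝ) : ℂ :=
  ∑ j, c j * exp (-I * j * t)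

def hankelMatrix (f : ℕ → ℂ) (n : ℕ) : Matrix (Fin n) (Fin n) ℂ :=
  Matrix.of fun i j => f (i.1 + j.1 + 1)

lemma intervalIntegral.integral_finsetSum_finsetSum {ι κ E : Type*} [NormedAddCommGroup E]
    [NormedSpace ℝ E]
    {a b : ℝ} {μ : Measure ℝ} (s : Finset ι) (s' : Finset κ) {F : ι → κ → ℝ → E}
    (hF : ∀ i j, IntervalIntegrable (F i j) μ a b) :
    ∫ x in a..b, ∑ i ∈ s, ∑ j ∈ s', F i j x ∂μ =
      ∑ i ∈ s, ∑ j ∈ s', ∫ x in a..b, F i j x ∂μ := by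
  rw [intervalIntegral.integral_finsetSum fun i _ => by
    simpa only [Finset.sum_fn] using IntervalIntegrable.sum s' fun j _ => hF i j]
  exact Finset.sum_congr rfl fun i _ => intervalIntegral.integral_finsetSum fun j _ => hF i j

lemma integral_exp_mul_conj_exp (a b : ℕ) :
    ∫ t in (0 : ℝ)..2 * π, exp (-I * a * t) * conj (exp (-I * b * t)) =
      if a = b then (2 * π : ℂ) else 0 := by
  have h_exp (t : ℝ) : exp (-I * a * t) * conj (exp (-I * b * t)) =
      exp (I * ((b : ℂ) - a) * t) := by
    rw [← exp_conj, ← Complex.exp_add]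
    simp only [map_mul, map_neg, conj_I, conj_natCast, conj_ofReal]
    ring_nf
  simp only [h_exp]
  split_ifs with hab
  · simp [hab]
  · have hc : I * ((b : ℂ) - a) ≠ 0 :=
      mul_ne_zero I_ne_zero (sub_ne_zero.mpr (mod_cast Ne.symm hab))
    have h_period :
        I * ((b : ℂ) - a) * ((2 * π : ℝ) : ℂ) = ((b - a : ℤ) : ℂ) * (2 * π * I) := by
      push_cast; ring
    rw [integral_exp_mul_complex hc, h_period, exp_int_mul_two_pi_mul_I]
    simp

@[fun_prop]
lemma continuous_trigPoly {n : ℕ} (c : Fin n → ℂ) : Continuous (trigPoly c) := by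
  unfold trigPoly; fun_prop

lemma integral_trigPoly_mul_conj {n : ℕ} (c d : Fin n → ℂ) :
    ∫ t in (0 : ℝ)..2 * π, trigPoly c t * conj (trigPoly d t) =
      2 * π * ∑ j, c j * conj (d j) := by
  have h_expand (t : ℝ) : trigPoly c t * conj (trigPoly d t) = ∑ j, ∑ k,
      c j * conj (d k) * (exp (-I * j * t) * conj (exp (-I * k * t))) := by
    simp only [trigPoly, map_sum, map_mul, Finset.sum_mul_sum]
    exact Finset.sum_congr rfl fun j _ => Finset.sum_congr rfl fun k _ => by ring
  have h_term (j k : Fin n) : ∫ t in (0 : ℝ)..2 * π,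
      c j * conj (d k) * (exp (-I * j * t) * conj (exp (-I * k * t))) =
        if j = k then c j * conj (d k) * (2 * π) else 0 := by
    rw [intervalIntegral.integral_const_mul, integral_exp_mul_conj_exp]
    simp [Fin.val_inj]
  simp only [h_expand]
  rw [intervalIntegral.integral_finsetSum_finsetSum _ _ fun j k =>
    Continuous.intervalIntegrable (by fun_prop) _ _]
  simp only [h_term, Finset.sum_ite_eq, Finset.mem_univ, if_true, Finset.mul_sum]
  exact Finset.sum_congr rfl fun j _ => by ring

lemma integral_norm_trigPoly_sq {n : ℕ} (c : Fin n → ℂ) :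
    ∫ t in (0 : ℝ)..2 * π, ‖trigPoly c t‖ ^ 2 = 2 * π * ∑ j, ‖c j‖ ^ 2 := by
  apply ofReal_injective
  simp only [← intervalIntegral.integral_ofReal, ofReal_pow, ← mul_conj',
    integral_trigPoly_mul_conj]
  push_cast
  simp only [mul_conj']

lemma MeasureTheory.MemLp.essSup_norm_nonneg {α E : Type*} [MeasurableSpace α]
    [NormedAddCommGroup E] {μ : Measure α} {g : α → E} (hg : MemLp g ⊤ μ) : 0 ≤ essSup (‖g ·‖) μ :=
  lpNorm_exponent_top_eq_essSup hg ▸ lpNorm_nonneg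

lemma MeasureTheory.MemLp.ae_norm_le_essSup {α E : Type*} [MeasurableSpace α]
    [NormedAddCommGroup E] {μ : Measure α} {g : α → E} (hg : MemLp g ⊤ μ) :
    ∀ᵐ x ∂μ, ‖g x‖ ≤ essSup (‖g ·‖) μ :=
  ae_le_essSup ⟨_, ae_le_lpNorm_exponent_top hg⟩

section Hankel

variable {g : ℝ → ℂ} {f : ℕ → ℂ}

lemma dotProduct_hankelMatrix_mulVec
    (hf : ∀ k : ℕ, 1 ≤ k →
      f k = (1 / (2 * π)) * ∫ t in (0 : ℝ)..(2 * π), g t * exp (-I * k * t))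
    (hg : IntervalIntegrable g volume 0 (2 * π)) {n : ℕ} (a b : Fin n → ℂ) :
    a ⬝ᵥ (hankelMatrix f n *ᵥ b) = (1 / (2 * π)) *
      ∫ t in (0 : ℝ)..2 * π, trigPoly a t * trigPoly b t * exp (-I * t) * g t := by
  have h_entry (i j : Fin n) : a i * (f (i + j + 1) * b j) = (1 / (2 * π)) *
      ∫ t in (0 : ℝ)..2 * π,
        a i * exp (-I * i * t) * (b j * exp (-I * j * t)) * exp (-I * t) * g t := by
    have h_exp (t : ℝ) : exp (-I * (i + j + 1 : ℕ) * t) =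
        exp (-I * i * t) * exp (-I * j * t) * exp (-I * t) := by
      rw [← Complex.exp_add, ← Complex.exp_add]
      push_cast
      ring_nf
    rw [hf _ (by omega)]
    calc _ = 1 / (2 * π) * ∫ t in (0 : ℝ)..2 * π,
          a i * b j * (g t * exp (-I * (i + j + 1 : ℕ) * t)) := by
          rw [intervalIntegral.integral_const_mul]; ring
      _ = _ := by
          congr 1
          refine intervalIntegral.integral_congr fun t _ => ?_
          simp only [h_exp]
          ring
  have h_expand (t : ℝ) : trigPoly a t * trigPoly b t * exp (-I * t) * g t = ∑ i, ∑ j,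
      a i * exp (-I * i * t) * (b j * exp (-I * j * t)) * exp (-I * t) * g t := by
    rw [trigPoly, trigPoly, Finset.sum_mul_sum]
    simp only [Finset.sum_mul]
  simp only [dotProduct, hankelMatrix, Matrix.mulVec, Matrix.of_apply, Finset.mul_sum, h_entry,
    h_expand]
  rw [intervalIntegral.integral_finsetSum_finsetSum _ _ fun i j =>
    hg.continuousOn_mul (Continuous.continuousOn (by fun_prop)), Finset.mul_sum]
  simp only [Finset.mul_sum]

lemma norm_dotProduct_hankelMatrix_mulVec_le
    (hf : ∀ k : ℕ, 1 ≤ k →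
      f k = (1 / (2 * π)) * ∫ t in (0 : ℝ)..(2 * π), g t * exp (-I * k * t))
    (hg : MemLp g ⊤ volume) {n : ℕ} (a b : Fin n → ℂ) :
    ‖a ⬝ᵥ (hankelMatrix f n *ᵥ b)‖ ≤
      essSup (fun t => ‖g t‖) volume * ((∑ i, ‖a i‖ ^ 2 + ∑ j, ‖b j‖ ^ 2) / 2) := by
  set M := essSup (fun t => ‖g t‖) volume
  have h_pointwise : ∀ᵐ t ∂volume, t ∈ Set.Ioc 0 (2 * π) →
      ‖trigPoly a t * trigPoly b t * exp (-I * t) * g t‖ ≤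
        M * ((‖trigPoly a t‖ ^ 2 + ‖trigPoly b t‖ ^ 2) / 2) := by
    filter_upwards [hg.ae_norm_le_essSup] with t ht _
    have h_unit : ‖exp (-I * t)‖ = 1 := by simp [norm_exp]
    rw [norm_mul, norm_mul, norm_mul, h_unit, mul_one]
    calc _ ≤ ‖trigPoly a t‖ * ‖trigPoly b t‖ * M := by gcongr
      _ ≤ _ := by
        nlinarith [hg.essSup_norm_nonneg, two_mul_le_add_sq ‖trigPoly a t‖ ‖trigPoly b t‖]
  have hg_int : IntervalIntegrable g volume 0 (2 * π) :=
    ⟨(hg.restrict _).integrable le_top, (hg.restrict _).integrable le_top⟩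
  rw [dotProduct_hankelMatrix_mulVec hf hg_int, norm_mul]
  calc _ ≤ ‖1 / (2 * π : ℂ)‖ * ∫ t in (0 : ℝ)..2 * π,
        M * ((‖trigPoly a t‖ ^ 2 + ‖trigPoly b t‖ ^ 2) / 2) := by
        gcongr
        exact intervalIntegral.norm_integral_le_of_norm_le (by positivity) h_pointwise
          (Continuous.intervalIntegrable (by fun_prop) _ _)
    _ = _ := by
        rw [intervalIntegral.integral_const_mul, intervalIntegral.integral_div,
          intervalIntegral.integral_add (Continuous.intervalIntegrable (by fun_prop) _ _)
            (Continuous.intervalIntegrable (by fun_prop) _ _),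
          integral_norm_trigPoly_sq, integral_norm_trigPoly_sq]
        have : ‖1 / (2 * π : ℂ)‖ = 1 / (2 * π) := by simp [abs_of_pos pi_pos]
        rw [this]
        field_simp

end Hankel

theorem stmt_3_general (g : ℝ → ℂ)
    (hg_bdd : MeasureTheory.MemLp g ⊤ volume)
    (f : ℕ → ℂ)
    (hf : ∀ k : ℕ, 1 ≤ k →
      f k = (1 / (2 * π)) * ∫ t in (0 : ℝ)..(2 * π), g t * Complex.exp (-Complex.I * k * t))
    (n : ℕ) :
    ‖Matrix.toEuclideanCLM (𝕜 := ℂ)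
        (Matrix.of fun i j : Fin n => f (i.1 + j.1 + 1))‖ ≤
      essSup (fun t => ‖g t‖) volume := by
  refine ContinuousLinearMap.opNorm_le_of_re_inner_le
    hg_bdd.essSup_norm_nonneg fun x y hx hy => ?_
  rw [inner_re_symm, EuclideanSpace.inner_eq_star_dotProduct, Matrix.ofLp_toEuclideanCLM,
    dotProduct_comm]
  calc _ ≤ _ := RCLike.re_le_norm _
    _ ≤ _ := norm_dotProduct_hankelMatrix_mulVec_le hf hg_bdd _ _
    _ = _ := by
      simp [← EuclideanSpace.norm_sq_eq, hx, hy]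

/-- Nehari-type bound: if `f(k)` are the Fourier coefficients
`f(k) = (1/2π) ∫₀^{2π} g(t) e^{-ikt} dt` of a `2π`-periodic essentially bounded
measurable symbol `g`, then the operator 2-norm of every Hankel matrix with entries
`H_{ij} = f(i+j-1)` is at most `esssup |g|`. -/
theorem stmt_3 (g : ℝ → ℂ) (hg_meas : Measurable g)
    (hg_per : Function.Periodic g (2 * π))
    (hg_bdd : MeasureTheory.MemLp g ⊤ volume)
    (f : ℕ → ℂ)
    (hf : ∀ k : ℕ, 1 ≤ k →
      f k = (1 / (2 * π)) * ∫ t in (0 : ℝ)..(2 * π), g t * Complex.exp (-Complex.I * k * t))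
    (n : ℕ) :
    ‖Matrix.toEuclideanCLM (𝕜 := ℂ)
        (Matrix.of fun i j : Fin n => f (i.1 + j.1 + 1))‖ ≤
      essSup (fun t => ‖g t‖) volume :=
  stmt_3_general g hg_bdd f hf n
end

section
/- Let σ₁ ≥ σ₂ ≥ … ≥ σ_n ≥ 0 and suppose σ_{2k+1} ≤ 16 q^{-2k+2} σ₁ for all k ≥ 0, where q = exp(π² / (4((d+2) ln 2 − ln π))) for some d ∈ ℕ with 2^{d+2} > π. Then for every ε ∈ (0,1) there exists r ≤ C d (ln d + ln(1/ε) + ln σ₁ + 1), with C an absolute constant, such that √(∑_{k>r} σ_k²) ≤ ε, provided σ₁ ≥ 1. -/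
open Real

/-! Monotonicity turns the decay of the odd-indexed values into `σ j ≤ 16 σ₁ e^{t(4-j)}` for every
`j ≥ 1`, where `t = ln q`, so the squared tail beyond `r` is dominated by a geometric series of sum
at most `(16 σ₁)² / (2t) · e^{-2t(r-4)}`. Since `t ≥ 1/d`, the rank `r = 4 + ⌈4dL⌉` with
`L = ln d + ln(1/ε) + ln σ₁ + 1` brings this below `128 d σ₁² e^{-8L} ≤ ε²`. -/

lemma sum_Ioc_exp_neg_mul_le {s : ℝ} (hs : 0 < s) (r n : ℕ) :
    ∑ j ∈ Finset.Ioc r n, exp (-(s * j)) ≤ exp (-(s * r)) / s := by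
  have hx : exp (-s) < 1 := exp_lt_one_iff.2 (neg_lt_zero.2 hs)
  have hgeom := geom_sum_Ico_le_of_lt_one (m := r + 1) (n := n + 1) (exp_pos (-s)).le hx
  rw [Finset.Ico_add_one_add_one_eq_Ioc] at hgeom
  have hterm (j : ℕ) : exp (-(s * j)) = exp (-s) ^ j := by rw [← exp_nat_mul]; ring_nf
  have hden : s * exp (-s) ≤ 1 - exp (-s) := by
    have := add_one_le_exp s
    have h1 : exp s * exp (-s) = 1 := by rw [← exp_add]; simp
    nlinarith [exp_pos (-s)]
  calc ∑ j ∈ Finset.Ioc r n, exp (-(s * j)) = ∑ j ∈ Finset.Ioc r n, exp (-s) ^ j := by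
        simp only [hterm]
    _ ≤ exp (-s) ^ r * exp (-s) / (1 - exp (-s)) := by rwa [← pow_succ]
    _ ≤ exp (-s) ^ r * exp (-s) / (s * exp (-s)) := by gcongr
    _ = exp (-(s * r)) / s := by rw [hterm]; field_simp

lemma Antitone.le_mul_exp_of_odd_le {σ : ℕ → ℝ} (hσ : Antitone σ) {c t : ℝ} (hc : 0 ≤ c)
    (ht : 0 ≤ t) (h : ∀ k : ℕ, σ (2 * k + 1) ≤ c * exp (t * (2 - 2 * k))) {j : ℕ} (hj : 1 ≤ j) :
    σ j ≤ c * exp (t * (4 - j)) := by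
  obtain ⟨k, hk⟩ : ∃ k : ℕ, j = 2 * k + 1 ∨ j = 2 * k + 2 := ⟨(j - 1) / 2, by omega⟩
  have hjk : (j : ℝ) ≤ 2 * k + 2 := by rcases hk with rfl | rfl <;> push_cast <;> linarith
  calc σ j ≤ σ (2 * k + 1) := hσ (by omega)
    _ ≤ c * exp (t * (2 - 2 * k)) := h k
    _ ≤ c * exp (t * (4 - j)) := by
        gcongr c * exp ?_; exact mul_le_mul_of_nonneg_left (by linarith) ht

lemma Antitone.sum_Ioc_sq_le_of_odd_le {σ : ℕ → ℝ} (hσ : Antitone σ) (hσ0 : ∀ k, 0 ≤ σ k)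
    {c t : ℝ} (hc : 0 ≤ c) (ht : 0 < t) (h : ∀ k : ℕ, σ (2 * k + 1) ≤ c * exp (t * (2 - 2 * k)))
    (r n : ℕ) :
    ∑ j ∈ Finset.Ioc r n, σ j ^ 2 ≤ c ^ 2 / (2 * t) * exp (-(2 * t * (r - 4))) := by
  have hpoint (j : ℕ) (hj : j ∈ Finset.Ioc r n) :
      σ j ^ 2 ≤ c ^ 2 * exp (8 * t) * exp (-(2 * t * j)) := by
    have := hσ.le_mul_exp_of_odd_le hc ht.le h (j := j) (by simp at hj; omega)
    calc σ j ^ 2 ≤ (c * exp (t * (4 - j))) ^ 2 := by gcongr; exact hσ0 j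
      _ = c ^ 2 * exp (8 * t) * exp (-(2 * t * j)) := by
        rw [mul_pow, ← exp_nat_mul, mul_assoc, ← exp_add]; ring_nf
  calc ∑ j ∈ Finset.Ioc r n, σ j ^ 2
      ≤ c ^ 2 * exp (8 * t) * ∑ j ∈ Finset.Ioc r n, exp (-(2 * t * j)) := by
        rw [Finset.mul_sum]; exact Finset.sum_le_sum hpoint
    _ ≤ c ^ 2 * exp (8 * t) * (exp (-(2 * t * r)) / (2 * t)) := by
        gcongr; exact sum_Ioc_exp_neg_mul_le (by positivity) r n
    _ = c ^ 2 / (2 * t) * exp (-(2 * t * (r - 4))) := by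
        rw [mul_div_assoc', mul_assoc, ← exp_add]; ring_nf

lemma inv_natCast_le_pi_sq_div {d : ℕ} (hd : 1 ≤ d) (hπ : π < 2 ^ (d + 2)) :
    (d : ℝ)⁻¹ ≤ π ^ 2 / (4 * ((d + 2) * log 2 - log π)) := by
  have hd' : (1 : ℝ) ≤ d := by exact_mod_cast hd
  have hlogπ : log π < (d + 2) * log 2 := by
    have := log_lt_log pi_pos hπ
    rwa [log_pow, Nat.cast_add, Nat.cast_two] at this
  have hlogπ0 : 0 ≤ log π := log_nonneg (by linarith [pi_gt_three])
  have hπ2 : 9 < π ^ 2 := by nlinarith [pi_gt_three]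
  have hlog2 := log_two_lt_d9
  rw [inv_eq_one_div, div_le_div_iff₀ (by positivity) (by linarith)]
  nlinarith

lemma mul_exp_neg_le_sq {d s ε : ℝ} (hd : 1 ≤ d) (hs : 1 ≤ s) (hε : 0 < ε) (hε1 : ε ≤ 1) :
    128 * d * s ^ 2 * exp (-(8 * (log d + log (1 / ε) + log s + 1))) ≤ ε ^ 2 := by
  have hlogd := log_nonneg hd
  have hlogs := log_nonneg hs
  have hlogε := log_nonneg (one_le_one_div hε hε1)
  have hlog128 : log 128 < 8 := by
    rw [show (128 : ℝ) = 2 ^ 7 by norm_num, log_pow]; push_cast; linarith [log_two_lt_d9]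
  have hinv : log (1 / ε) = -log ε := by rw [one_div, log_inv]
  rw [← exp_log (show 0 < 128 * d * s ^ 2 by positivity), ← exp_log (pow_pos hε 2), ← exp_add,
    exp_le_exp, log_mul (by positivity) (by positivity), log_mul (by norm_num) (by positivity),
    log_pow, log_pow, hinv]
  push_cast
  linarith

/-- If `σ₁ ≥ σ₂ ≥ … ≥ σ_n ≥ 0` satisfy the Beckermann–Townsend decay
`σ_{2k+1} ≤ 16 q(d)^{2-2k} σ₁` with `q(d) = exp(π²/(4((d+2)ln 2 − ln π)))`, then for
every `ε ∈ (0,1)` there is a rank `r ≤ C d (ln d + ln(1/ε) + ln σ₁ + 1)`, `C` an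
absolute constant, with `√(∑_{k>r} σ_k²) ≤ ε` (provided `σ₁ ≥ 1`). -/
theorem stmt_11 :
    ∃ C : ℝ, 0 < C ∧
      ∀ (d n : ℕ), 1 ≤ d → (π : ℝ) < 2 ^ (d + 2) →
      ∀ (q : ℝ), q = Real.exp (π ^ 2 / (4 * ((d + 2) * Real.log 2 - Real.log π))) →
      ∀ σ : ℕ → ℝ, Antitone σ → (∀ k, 0 ≤ σ k) → (∀ k, n < k → σ k = 0) →
        (∀ k : ℕ, σ (2 * k + 1) ≤ 16 * q ^ ((2 : ℝ) - 2 * k) * σ 1) →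
        1 ≤ σ 1 →
      ∀ ε : ℝ, ε ∈ Set.Ioo (0 : ℝ) 1 →
        ∃ r : ℕ,
          (r : ℝ) ≤ C * d * (Real.log d + Real.log (1 / ε) + Real.log (σ 1) + 1) ∧
          Real.sqrt (∑ k ∈ Finset.Ioc r n, σ k ^ 2) ≤ ε := by
  refine ⟨9, by norm_num, ?_⟩
  rintro d n hd hπ q rfl σ hσ hσ0 - hdecay hσ1 ε ⟨hε0, hε1⟩
  set t := π ^ 2 / (4 * ((d + 2) * log 2 - log π))
  set L := log d + log (1 / ε) + log (σ 1) + 1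
  have hd1 : (1 : ℝ) ≤ d := by exact_mod_cast hd
  have htd : (d : ℝ)⁻¹ ≤ t := inv_natCast_le_pi_sq_div hd hπ
  have ht : 0 < t := (inv_pos.2 (by positivity)).trans_le htd
  have htd1 : 1 ≤ t * d := (inv_le_iff_one_le_mul₀ (by positivity)).1 htd
  have hL : 1 ≤ L := by
    linarith [log_nonneg hd1, log_nonneg (one_le_one_div hε0 hε1.le), log_nonneg hσ1]
  have hdL : 1 ≤ d * L := one_le_mul_of_one_le_of_one_le hd1 hL
  refine ⟨4 + ⌈4 * d * L⌉₊, ?_, ?_⟩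
  · have := Nat.ceil_lt_add_one (show 0 ≤ 4 * (d : ℝ) * L by positivity)
    push_cast
    linarith
  have hdecay' (k : ℕ) : σ (2 * k + 1) ≤ 16 * σ 1 * exp (t * (2 - 2 * k)) := by
    rw [exp_mul]; linarith [hdecay k]
  rw [sqrt_le_left hε0.le]
  calc ∑ k ∈ Finset.Ioc (4 + ⌈4 * d * L⌉₊) n, σ k ^ 2
      ≤ (16 * σ 1) ^ 2 / (2 * t) * exp (-(2 * t * ((4 + ⌈4 * d * L⌉₊ : ℕ) - 4))) :=
        hσ.sum_Ioc_sq_le_of_odd_le hσ0 (by linarith) ht hdecay' _ n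
    _ ≤ 128 * d * σ 1 ^ 2 * exp (-(8 * L)) := by
        have hc : (16 * σ 1) ^ 2 / (2 * t) ≤ 128 * d * σ 1 ^ 2 := by
          rw [div_le_iff₀ (by positivity)]; nlinarith [sq_nonneg (σ 1)]
        have hr : 8 * L ≤ 2 * t * ⌈4 * d * L⌉₊ := by
          nlinarith [Nat.le_ceil (4 * d * L)]
        push_cast
        rw [add_sub_cancel_left]
        exact mul_le_mul hc (exp_le_exp.2 (by linarith)) (exp_pos _).le (by positivity)
    _ ≤ ε ^ 2 := mul_exp_neg_le_sq hd1 hσ1 hε0 hε1.le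
end

section
/- Let α > 1 and f(k) = k^{-α}. There exists a constant C > 0 (independent of α, ε, d) such that for all ε ∈ (0,1) and all d ∈ ℕ there exists a tensor T of size 2 × ⋯ × 2 (d factors) with all tensor-train ranks at most C d (ln d + ln(1/ε) + ln ζ(α) + 1) satisfying ‖Q(d,f) − T‖_F ≤ ε, where Q(d,f) is the reshaping of the vector (1^{-α}, 2^{-α}, …, (2^d)^{-α}). -/
/-!
Index the entries by `m = k - 1 < 2 ^ d`. On the dyadic block `2 ^ j ≤ m < 2 ^ (j + 1)` we have
`(m + 1) ^ (-α) = (2 ^ j) ^ (-α) x ^ (-α)` with `x = (m + 1) / 2 ^ j ∈ [1, 2]`, and the Taylor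
polynomial of degree `p` of `x ^ (-α)` at `3 / 2` is within `E = 4 ^ ⌈α⌉ (2 / 3) ^ p` of it. The
approximant keeps the first entry, uses these polynomials on the first `K ≤ d` blocks and vanishes
beyond. Each of its `1 + K` pieces is a polynomial of degree `≤ p` on a dyadic interval and zero
elsewhere; in an unfolding such an interval either lies in the first row or is a union of whole
rows, on each of which the entries are a polynomial in the column index, so every unfolding has
rank `≤ 1 + K (p + 1)`. The entry errors are at most `2 E / (m + 1)` on the blocks and
`1 / (m + 1)` beyond `2 ^ K`, hence `p, K = O(log (1 / ε))` suffice while `α = O(log (1 / ε))`;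
for larger `α` all entries but the first are below `ε / (m + 1)` and the first entry alone does.
-/

open Real

/-- The `s`-unfolding of a vector `u ∈ ℝ^{2^d}`: the `2^s × 2^{d-s}` matrix with
entries `u((i-1)·2^{d-s} + j)` (1-based). Its rank is the `s`-th TT-rank of the
corresponding `2 × ⋯ × 2` tensor. -/
def unfolding {d : ℕ} (s : ℕ) (hs : s ≤ d) (u : Fin (2 ^ d) → ℝ) :
    Matrix (Fin (2 ^ s)) (Fin (2 ^ (d - s))) ℝ :=
  Matrix.of fun i j =>
    u ⟨i.1 * 2 ^ (d - s) + j.1, by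
      calc i.1 * 2 ^ (d - s) + j.1 < i.1 * 2 ^ (d - s) + 2 ^ (d - s) := by
            exact Nat.add_lt_add_left j.2 _
        _ = (i.1 + 1) * 2 ^ (d - s) := by ring
        _ ≤ 2 ^ s * 2 ^ (d - s) := Nat.mul_le_mul_right _ i.2
        _ = 2 ^ d := by rw [← pow_add, Nat.add_sub_cancel' hs]⟩

open Finset Polynomial
open scoped Nat

theorem Nat.ascFactorial_succ_le (n p : ℕ) : n.ascFactorial (p + 1) ≤ 4 ^ n * 2 ^ p * p ! := by
  rw [Nat.ascFactorial_succ, ← Nat.succ_ascFactorial, Nat.ascFactorial_eq_factorial_mul_choose]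
  calc n * (p ! * (n + p).choose p) ≤ 2 ^ n * (p ! * 2 ^ (n + p)) := by
        gcongr
        · exact n.lt_two_pow_self.le
        · exact Nat.choose_le_two_pow _ _
    _ = 4 ^ n * 2 ^ p * p ! := by rw [pow_add, show (4 : ℕ) = 2 * 2 from rfl, mul_pow]; ring

theorem prod_range_add_le_ascFactorial {α : ℝ} (hα : 0 ≤ α) (k : ℕ) :
    ∏ j ∈ range k, (α + j) ≤ (⌈α⌉₊.ascFactorial k : ℝ) := by
  rw [Nat.ascFactorial_eq_prod_range, Nat.cast_prod]
  gcongr with j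
  push_cast
  linarith [Nat.le_ceil α]

theorem abs_iteratedDeriv_rpow_neg {α y : ℝ} (hy : 0 < y) (hα : 0 ≤ α) (k : ℕ) :
    |iteratedDeriv k (fun x : ℝ => x ^ (-α)) y| = (∏ j ∈ range k, (α + j)) * y ^ (-α - k) := by
  rw [iteratedDeriv_eq_iterate, iter_deriv_rpow_const, descPochhammer_eval_eq_prod_range,
    abs_mul, abs_prod, abs_of_pos (rpow_pos_of_pos hy _)]
  congr 1
  refine prod_congr rfl fun j _ => ?_
  rw [show -α - (j : ℝ) = -(α + j) by ring, abs_neg, abs_of_nonneg (by positivity)]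

theorem abs_iteratedDeriv_succ_rpow_neg_mul_pow_le {α y : ℝ} (hy : 1 ≤ y) (hα : 0 ≤ α) (p : ℕ) :
    |iteratedDeriv (p + 1) (fun x : ℝ => x ^ (-α)) y| * y ^ p ≤ 4 ^ ⌈α⌉₊ * 2 ^ p * p ! := by
  have hy₀ : 0 < y := one_pos.trans_le hy
  rw [abs_iteratedDeriv_rpow_neg hy₀ hα, mul_assoc, ← rpow_natCast y p, ← rpow_add hy₀]
  calc (∏ j ∈ range (p + 1), (α + j)) * y ^ (-α - ↑(p + 1) + p)
      ≤ (∏ j ∈ range (p + 1), (α + j)) * 1 := by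
        gcongr
        exact rpow_le_one_of_one_le_of_nonpos hy (by push_cast; linarith)
    _ ≤ 4 ^ ⌈α⌉₊ * 2 ^ p * p ! := by
        rw [mul_one]
        exact (prod_range_add_le_ascFactorial hα _).trans
          (by exact_mod_cast Nat.ascFactorial_succ_le _ _)

noncomputable def taylorPoly (f : ℝ → ℝ) (n : ℕ) (x₀ : ℝ) : ℝ[X] :=
  ∑ k ∈ range (n + 1), C (iteratedDeriv k f x₀ / k !) * (X - C x₀) ^ k

theorem natDegree_taylorPoly_le (f : ℝ → ℝ) (n : ℕ) (x₀ : ℝ) :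
    (taylorPoly f n x₀).natDegree ≤ n := by
  refine natDegree_sum_le_of_forall_le _ _ fun k hk => ?_
  refine (natDegree_C_mul_le _ _).trans ?_
  exact natDegree_pow_le_of_le k (natDegree_X_sub_C_le _) |>.trans (by simp at hk; omega)

theorem eval_taylorPoly (f : ℝ → ℝ) (n : ℕ) (x₀ x : ℝ) :
    (taylorPoly f n x₀).eval x =
      ∑ k ∈ range (n + 1), iteratedDeriv k f x₀ / k ! * (x - x₀) ^ k := by
  simp [taylorPoly, eval_finsetSum]

theorem taylorPoly_eval_self (f : ℝ → ℝ) (n : ℕ) (x₀ : ℝ) :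
    (taylorPoly f n x₀).eval x₀ = f x₀ := by
  simp [eval_taylorPoly, sum_range_succ']

theorem taylorPoly_remainder_cauchy {f : ℝ → ℝ} {x x₀ : ℝ} {n : ℕ} (hx : x₀ ≠ x)
    (hf : ∀ y ∈ Set.uIcc x₀ x, ContDiffAt ℝ (n + 1) f y) :
    ∃ ξ ∈ Set.uIoo x₀ x, f x - (taylorPoly f n x₀).eval x =
      iteratedDeriv (n + 1) f ξ * (x - ξ) ^ n / n ! * (x - x₀) := by
  have hs : UniqueDiffOn ℝ (Set.uIcc x₀ x) := uniqueDiffOn_uIcc hx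
  have hf' : ContDiffOn ℝ (n + 1) f (Set.uIcc x₀ x) := fun y hy => (hf y hy).contDiffWithinAt
  have hwithin : ∀ k ≤ n + 1, ∀ y ∈ Set.uIcc x₀ x,
      iteratedDerivWithin k f (Set.uIcc x₀ x) y = iteratedDeriv k f y := fun k hk y hy =>
    iteratedDerivWithin_eq_iteratedDeriv hs ((hf y hy).of_le (by exact_mod_cast hk)) hy
  obtain ⟨ξ, hξ, h⟩ := taylor_mean_remainder_cauchy hx hf'.of_succ
    ((hf'.differentiableOn_iteratedDerivWithin (by norm_cast; omega) hs).mono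
      Set.uIoo_subset_uIcc_self)
  refine ⟨ξ, hξ, ?_⟩
  rw [← hwithin (n + 1) le_rfl ξ (Set.uIoo_subset_uIcc_self hξ), ← h, taylor_within_apply,
    eval_taylorPoly]
  congr 1
  refine sum_congr rfl fun k hk => ?_
  rw [hwithin k (by simp at hk; omega) x₀ Set.left_mem_uIcc, smul_eq_mul]
  ring

theorem abs_rpow_neg_sub_taylorPoly_le {α : ℝ} (hα : 0 ≤ α) (p : ℕ) {x : ℝ}
    (hx : x ∈ Set.Icc (1 : ℝ) 2) :
    |x ^ (-α) - (taylorPoly (fun y => y ^ (-α)) p (3 / 2)).eval x| ≤ 4 ^ ⌈α⌉₊ * (2 / 3) ^ p := by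
  obtain ⟨hx₁, hx₂⟩ := hx
  rcases eq_or_ne x (3 / 2) with rfl | hx₀
  · rw [taylorPoly_eval_self, sub_self, abs_zero]
    positivity
  obtain ⟨ξ, hξ, h⟩ := taylorPoly_remainder_cauchy (f := fun y => y ^ (-α)) (n := p) hx₀.symm
    fun y hy => contDiffAt_rpow_const_of_ne <| ne_of_gt <| by
      rw [Set.mem_uIcc] at hy; rcases hy with hy | hy <;> linarith
  have hξ' : ξ ∈ Set.Ioo x (3 / 2) ∨ ξ ∈ Set.Ioo (3 / 2) x := by
    rcases hx₀.lt_or_gt with h | h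
    · exact .inl (by rwa [Set.uIoo_of_gt h] at hξ)
    · exact .inr (by rwa [Set.uIoo_of_lt h] at hξ)
  -- The Cauchy form of the remainder gains the factor `|x - ξ| / ξ ≤ 1 / 3`, which beats the growth
  -- `2 ^ p` of the derivatives; the Lagrange form would only give `1 / 2`.
  have hξ₁ : 1 ≤ ξ := by rcases hξ' with ⟨_, _⟩ | ⟨_, _⟩ <;> linarith
  have hxξ : |x - ξ| ≤ ξ / 3 := by
    rw [abs_le]; rcases hξ' with ⟨_, _⟩ | ⟨_, _⟩ <;> constructor <;> linarith
  have hx₀' : |x - 3 / 2| ≤ 1 / 2 := by rw [abs_le]; constructor <;> linarith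
  have hD := abs_iteratedDeriv_succ_rpow_neg_mul_pow_le hξ₁ hα p
  have hfac : (0 : ℝ) < p ! := by positivity
  rw [h, abs_mul, abs_div, abs_mul, abs_pow, abs_of_pos hfac]
  calc |iteratedDeriv (p + 1) (fun y => y ^ (-α)) ξ| * |x - ξ| ^ p / p ! * |x - 3 / 2|
      ≤ |iteratedDeriv (p + 1) (fun y => y ^ (-α)) ξ| * (ξ / 3) ^ p / p ! * (1 / 2) := by
        gcongr
    _ = |iteratedDeriv (p + 1) (fun y => y ^ (-α)) ξ| * ξ ^ p / p ! * (1 / 3) ^ p / 2 := by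
        rw [div_eq_mul_one_div ξ 3, mul_pow]; ring
    _ ≤ 4 ^ ⌈α⌉₊ * 2 ^ p * p ! / p ! * (1 / 3) ^ p / 2 := by gcongr
    _ = 4 ^ ⌈α⌉₊ * (2 / 3) ^ p / 2 := by
        rw [mul_div_cancel_right₀ _ hfac.ne', mul_assoc, ← mul_pow]; norm_num
    _ ≤ 4 ^ ⌈α⌉₊ * (2 / 3) ^ p := half_le_self (by positivity)

theorem Matrix.rank_add_le {m n K : Type*} [Fintype m] [Fintype n] [Field K]
    (A B : Matrix m n K) : (A + B).rank ≤ A.rank + B.rank := by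
  unfold Matrix.rank
  rw [Matrix.mulVecLin_add]
  exact (Submodule.finrank_mono (LinearMap.range_add_le _ _)).trans
    (Submodule.finrank_add_le_finrank_add_finrank _ _)

theorem Matrix.rank_sum_le {ι m n K : Type*} [Fintype m] [Fintype n] [Field K]
    (s : Finset ι) (A : ι → Matrix m n K) : (∑ i ∈ s, A i).rank ≤ ∑ i ∈ s, (A i).rank :=
  Finset.le_sum_of_subadditive _ Matrix.rank_zero.le Matrix.rank_add_le _ _

theorem unfolding_add {d s : ℕ} (hs : s ≤ d) (u v : Fin (2 ^ d) → ℝ) :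
    unfolding s hs (u + v) = unfolding s hs u + unfolding s hs v := rfl

theorem unfolding_sum {ι : Type*} {d s : ℕ} (hs : s ≤ d) (t : Finset ι)
    (u : ι → Fin (2 ^ d) → ℝ) :
    unfolding s hs (∑ i ∈ t, u i) = ∑ i ∈ t, unfolding s hs (u i) := by
  ext
  simp [unfolding, Matrix.sum_apply]

theorem Nat.mem_Ico_mul_iff {W a b x : ℕ} (hW : 0 < W) :
    x ∈ Ico (a * W) (b * W) ↔ x / W ∈ Ico a b := by
  simp only [Finset.mem_Ico, Nat.le_div_iff_mul_le hW, Nat.div_lt_iff_lt_mul hW]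

theorem Nat.mul_add_mem_Ico_iff {W a b i c : ℕ} (ha : W ∣ a) (hb : W ∣ b) (hc : c < W) :
    i * W + c ∈ Ico a b ↔ i * W ∈ Ico a b := by
  obtain ⟨a, rfl⟩ := ha
  obtain ⟨b, rfl⟩ := hb
  have hW : 0 < W := by omega
  rw [mul_comm W a, mul_comm W b, Nat.mem_Ico_mul_iff hW, Nat.mem_Ico_mul_iff hW, add_comm,
    Nat.add_mul_div_right _ _ hW, Nat.div_eq_of_lt hc, Nat.mul_div_cancel _ hW, zero_add]

noncomputable def polyOnIco (P : ℝ[X]) (a b m : ℕ) : ℝ :=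
  if m ∈ Ico a b then P.eval (m : ℝ) else 0

theorem rank_unfolding_polyOnIco_le {d s : ℕ} (hs : s ≤ d) (P : ℝ[X]) {a b : ℕ}
    (hab : b ≤ 2 ^ (d - s) ∨ 2 ^ (d - s) ∣ a ∧ 2 ^ (d - s) ∣ b) :
    (unfolding s hs fun k => polyOnIco P a b k).rank ≤ P.natDegree + 1 := by
  rcases hab with hb | ⟨ha, hb⟩
  · have hrow : unfolding s hs (fun k => polyOnIco P a b k) =
        Matrix.vecMulVec (fun i : Fin (2 ^ s) => if (i : ℕ) = 0 then (1 : ℝ) else 0)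
          fun c : Fin (2 ^ (d - s)) => polyOnIco P a b c := by
      ext i c
      rw [Matrix.vecMulVec_apply]
      by_cases hi : (i : ℕ) = 0
      · simp [unfolding, hi]
      · have : b ≤ i * 2 ^ (d - s) + c := hb.trans <| by
          nlinarith [Nat.pos_of_ne_zero hi]
        simp [unfolding, hi, polyOnIco, this]
    rw [hrow]
    exact (Matrix.rank_vecMulVec_le _ _).trans (by omega)
  · have hpoly : unfolding s hs (fun k => polyOnIco P a b k) =
        (Matrix.of fun (i : Fin (2 ^ s)) (t : Fin (P.natDegree + 1)) =>
          if (i : ℕ) * 2 ^ (d - s) ∈ Ico a b then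
            (P.comp (X + C ((i * 2 ^ (d - s) : ℕ) : ℝ))).coeff t else 0 :
            Matrix (Fin (2 ^ s)) (Fin (P.natDegree + 1)) ℝ) *
          Matrix.of fun (t : Fin (P.natDegree + 1)) (c : Fin (2 ^ (d - s))) =>
            (c : ℝ) ^ (t : ℕ) := by
      ext i c
      simp only [unfolding, polyOnIco, Matrix.of_apply, Matrix.mul_apply,
        Nat.mul_add_mem_Ico_iff ha hb c.2]
      split_ifs
      · set Q := P.comp (X + C ((i * 2 ^ (d - s) : ℕ) : ℝ))
        rw [Fin.sum_univ_eq_sum_range (fun t => Q.coeff t * (c : ℝ) ^ t),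
          ← eval_eq_sum_range' (by rw [natDegree_comp, natDegree_X_add_C, mul_one]; omega)]
        simp [Q, eval_comp, add_comm]
      · simp
    rw [hpoly]
    exact (Matrix.rank_mul_le_left _ _).trans (Matrix.rank_le_width _)

theorem rank_unfolding_polyOnIco_two_pow_le {d s : ℕ} (hs : s ≤ d) (P : ℝ[X]) (j : ℕ) :
    (unfolding s hs fun k => polyOnIco P (2 ^ j) (2 ^ (j + 1)) k).rank ≤ P.natDegree + 1 := by
  refine rank_unfolding_polyOnIco_le hs P ?_
  rcases le_or_gt (j + 1) (d - s) with h | h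
  · exact .inl (Nat.pow_le_pow_right two_pos h)
  · exact .inr ⟨pow_dvd_pow 2 (by omega), pow_dvd_pow 2 h.le⟩

noncomputable def dyadicTaylorPoly (α : ℝ) (p j : ℕ) : ℝ[X] :=
  C (((2 : ℝ) ^ j) ^ (-α)) *
    (taylorPoly (fun y => y ^ (-α)) p (3 / 2)).comp (C ((2 : ℝ) ^ j)⁻¹ * (X + 1))

theorem natDegree_dyadicTaylorPoly_le (α : ℝ) (p j : ℕ) :
    (dyadicTaylorPoly α p j).natDegree ≤ p := by
  refine (natDegree_C_mul_le _ _).trans <| natDegree_comp_le.trans ?_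
  calc _ ≤ p * 1 := by
        gcongr
        · exact natDegree_taylorPoly_le _ _ _
        · exact (natDegree_C_mul_le _ _).trans (natDegree_X_add_C _).le
    _ = p := mul_one p

theorem eval_dyadicTaylorPoly (α : ℝ) (p j : ℕ) (y : ℝ) :
    (dyadicTaylorPoly α p j).eval y =
      ((2 : ℝ) ^ j) ^ (-α) *
        (taylorPoly (fun y => y ^ (-α)) p (3 / 2)).eval ((y + 1) / 2 ^ j) := by
  simp [dyadicTaylorPoly, eval_comp, div_eq_inv_mul]

noncomputable def dyadicTaylorApprox (α : ℝ) (p K m : ℕ) : ℝ :=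
  polyOnIco 1 0 1 m + ∑ j ∈ range K, polyOnIco (dyadicTaylorPoly α p j) (2 ^ j) (2 ^ (j + 1)) m

theorem rank_unfolding_dyadicTaylorApprox_le {d s : ℕ} (hs : s ≤ d) (α : ℝ) (p K : ℕ) :
    (unfolding s hs fun k => dyadicTaylorApprox α p K k).rank ≤ 1 + K * (p + 1) := by
  have hsplit : (fun k : Fin (2 ^ d) => dyadicTaylorApprox α p K k) =
      (fun k : Fin (2 ^ d) => polyOnIco 1 0 1 k) + ∑ j ∈ range K,
        fun k : Fin (2 ^ d) => polyOnIco (dyadicTaylorPoly α p j) (2 ^ j) (2 ^ (j + 1)) k := by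
    ext k
    simp [dyadicTaylorApprox]
  rw [hsplit, unfolding_add, unfolding_sum]
  refine (Matrix.rank_add_le _ _).trans (add_le_add ?_ ((Matrix.rank_sum_le _ _).trans ?_))
  · simpa using rank_unfolding_polyOnIco_le hs 1 (.inl Nat.one_le_two_pow)
  · calc _ ≤ ∑ _j ∈ range K, (p + 1) := sum_le_sum fun j _ =>
          (rank_unfolding_polyOnIco_two_pow_le hs _ j).trans
            (Nat.add_le_add_right (natDegree_dyadicTaylorPoly_le α p j) 1)
      _ = K * (p + 1) := by simp

theorem mem_Ico_two_pow_iff {m j : ℕ} :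
    m ∈ Ico (2 ^ j) (2 ^ (j + 1)) ↔ m ≠ 0 ∧ Nat.log 2 m = j := by
  rcases eq_or_ne m 0 with rfl | hm
  · simp
  · rw [mem_Ico, Nat.log_eq_iff (.inr ⟨one_lt_two, hm⟩)]
    simp [hm]

theorem dyadicTaylorApprox_zero (α : ℝ) (p K : ℕ) : dyadicTaylorApprox α p K 0 = 1 := by
  simp [dyadicTaylorApprox, polyOnIco]

theorem dyadicTaylorApprox_of_mem {α : ℝ} {p K j m : ℕ} (hj : j < K)
    (hm : m ∈ Ico (2 ^ j) (2 ^ (j + 1))) :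
    dyadicTaylorApprox α p K m = (dyadicTaylorPoly α p j).eval (m : ℝ) := by
  have hm' := mem_Ico_two_pow_iff.mp hm
  rw [dyadicTaylorApprox, sum_eq_single_of_mem j (mem_range.mpr hj)]
  · simp [polyOnIco, hm, hm'.1]
  · intro i _ hij
    rw [polyOnIco, if_neg fun h => hij ((mem_Ico_two_pow_iff.mp h).2.symm.trans hm'.2)]

theorem dyadicTaylorApprox_of_le {α : ℝ} {p K m : ℕ} (hm : 2 ^ K ≤ m) :
    dyadicTaylorApprox α p K m = 0 := by
  have hm₀ : m ≠ 0 := by have := Nat.one_le_two_pow (n := K); omega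
  rw [dyadicTaylorApprox, sum_eq_zero]
  · simp [polyOnIco, hm₀]
  · intro j hj
    have : 2 ^ (j + 1) ≤ 2 ^ K := Nat.pow_le_pow_right two_pos (mem_range.mp hj)
    simp only [polyOnIco, mem_Ico]
    rw [if_neg (by omega)]

theorem abs_rpow_neg_sub_dyadicTaylorPoly_le {α : ℝ} (hα : 1 ≤ α) (p : ℕ) {j m : ℕ}
    (hm : m ∈ Ico (2 ^ j) (2 ^ (j + 1))) :
    |((m : ℝ) + 1) ^ (-α) - (dyadicTaylorPoly α p j).eval (m : ℝ)| ≤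
      2 * (4 ^ ⌈α⌉₊ * (2 / 3) ^ p) / (m + 1) := by
  rw [mem_Ico] at hm
  have h2j : (0 : ℝ) < 2 ^ j := by positivity
  have hlo : (2 : ℝ) ^ j ≤ m := by exact_mod_cast hm.1
  have hhi : (m : ℝ) + 1 ≤ 2 * 2 ^ j := by
    rw [← pow_succ']; exact_mod_cast hm.2
  rw [eval_dyadicTaylorPoly]
  set x := ((m : ℝ) + 1) / 2 ^ j
  have hx : x ∈ Set.Icc (1 : ℝ) 2 := by
    constructor
    · rw [le_div_iff₀ h2j]; linarith
    · rw [div_le_iff₀ h2j]; linarith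
  have hm1 : (m : ℝ) + 1 = 2 ^ j * x := (mul_div_cancel₀ _ h2j.ne').symm
  have hscale : ((2 : ℝ) ^ j) ^ (-α) ≤ 2 / (m + 1) := by
    calc ((2 : ℝ) ^ j) ^ (-α) ≤ ((2 : ℝ) ^ j) ^ (-1 : ℝ) :=
          rpow_le_rpow_of_exponent_le (one_le_pow₀ one_le_two) (by linarith)
      _ = 2 / (2 * 2 ^ j) := by rw [rpow_neg_one]; field_simp
      _ ≤ 2 / (m + 1) := by gcongr
  calc |((m : ℝ) + 1) ^ (-α) - ((2 : ℝ) ^ j) ^ (-α) *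
        (taylorPoly (fun y => y ^ (-α)) p (3 / 2)).eval x|
      = ((2 : ℝ) ^ j) ^ (-α) *
          |x ^ (-α) - (taylorPoly (fun y => y ^ (-α)) p (3 / 2)).eval x| := by
        rw [hm1, mul_rpow h2j.le (by linarith [hx.1]), ← mul_sub, abs_mul,
          abs_of_pos (rpow_pos_of_pos h2j _)]
    _ ≤ 2 / (m + 1) * (4 ^ ⌈α⌉₊ * (2 / 3) ^ p) :=
        mul_le_mul hscale (abs_rpow_neg_sub_taylorPoly_le (by linarith) p hx) (abs_nonneg _)
          (by positivity)
    _ = 2 * (4 ^ ⌈α⌉₊ * (2 / 3) ^ p) / (m + 1) := by ring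

theorem abs_sub_dyadicTaylorApprox_le {α : ℝ} (hα : 1 ≤ α) (p : ℕ) {K m : ℕ}
    (hm : m ∈ Ico 1 (2 ^ K)) :
    |((m : ℝ) + 1) ^ (-α) - dyadicTaylorApprox α p K m| ≤
      2 * (4 ^ ⌈α⌉₊ * (2 / 3) ^ p) / (m + 1) := by
  rw [mem_Ico] at hm
  have hm₀ : m ≠ 0 := by omega
  have hblock : m ∈ Ico (2 ^ Nat.log 2 m) (2 ^ (Nat.log 2 m + 1)) :=
    mem_Ico_two_pow_iff.mpr ⟨hm₀, rfl⟩
  rw [dyadicTaylorApprox_of_mem (Nat.log_lt_of_lt_pow hm₀ hm.2) hblock]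
  exact abs_rpow_neg_sub_dyadicTaylorPoly_le hα p hblock

theorem rpow_neg_le_two_rpow_div {x α : ℝ} (hx : 2 ≤ x) (hα : 1 ≤ α) :
    x ^ (-α) ≤ 2 ^ (1 - α) / x := by
  have hx₀ : 0 < x := by linarith
  rw [le_div_iff₀ hx₀]
  calc x ^ (-α) * x = x ^ (1 - α) := by
        rw [show 1 - α = -α + 1 by ring, rpow_add hx₀, rpow_one]
    _ ≤ 2 ^ (1 - α) := rpow_le_rpow_of_nonpos two_pos hx (by linarith)

theorem sum_Ico_sq_le_of_abs_le {g : ℕ → ℝ} {c : ℝ} {a b : ℕ}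
    (h : ∀ m ∈ Ico a b, |g m| ≤ c / (m + 1)) :
    ∑ m ∈ Ico a b, g m ^ 2 ≤ 2 * c ^ 2 / (a + 1) := by
  calc ∑ m ∈ Ico a b, g m ^ 2 ≤ ∑ m ∈ Ico a b, c ^ 2 * ((((m + 1 : ℕ) : ℝ)) ^ 2)⁻¹ :=
        sum_le_sum fun m hm => by
          rw [← sq_abs]
          calc |g m| ^ 2 ≤ (c / (m + 1)) ^ 2 := pow_le_pow_left₀ (abs_nonneg _) (h m hm) 2
            _ = _ := by push_cast; rw [div_pow, div_eq_mul_inv]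
    _ = c ^ 2 * ∑ i ∈ Ioo a (b + 1), ((i : ℝ) ^ 2)⁻¹ := by
        rw [← mul_sum, ← Ico_add_one_left_eq_Ioo,
          ← sum_Ico_add' (fun i : ℕ => ((i : ℝ) ^ 2)⁻¹)]
    _ ≤ c ^ 2 * (2 / (a + 1)) := by
        gcongr
        exact sum_Ioo_inv_sq_le a (b + 1)
    _ = 2 * c ^ 2 / (a + 1) := by ring

theorem sum_range_sq_le {g : ℕ → ℝ} {N n : ℕ} {c₁ c₂ : ℝ} (hN : 1 ≤ N) (hNn : N ≤ n)
    (h₀ : g 0 = 0) (h₁ : ∀ m ∈ Ico 1 N, |g m| ≤ c₁ / (m + 1))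
    (h₂ : ∀ m ∈ Ico N n, |g m| ≤ c₂ / (m + 1)) :
    ∑ m ∈ range n, g m ^ 2 ≤ c₁ ^ 2 + 2 * c₂ ^ 2 / (N + 1) := by
  rw [range_eq_Ico, ← sum_Ico_consecutive _ (Nat.zero_le N) hNn,
    ← sum_Ico_consecutive _ zero_le_one hN]
  have hlow : ∑ m ∈ Ico 1 N, g m ^ 2 ≤ c₁ ^ 2 :=
    (sum_Ico_sq_le_of_abs_le h₁).trans_eq (by norm_num)
  rw [Nat.Ico_zero_eq_range, range_one, sum_singleton, h₀, zero_pow two_ne_zero, zero_add]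
  exact add_le_add hlow (sum_Ico_sq_le_of_abs_le h₂)

/- `p = 6 r + 7` makes the block error `2 · 4 ^ ⌈α⌉ (2 / 3) ^ p ≤ ε / 2` since
`4 (2 / 3) ^ 6 ≤ 1 / 2`, and `K = 2 r + 2` (unless the blocks already cover all `2 ^ d` entries)
makes the tail `≤ ε ^ 2 / 2`. -/
theorem sum_sq_sub_dyadicTaylorApprox_le_of_le {α ε : ℝ} (hα : 1 ≤ α) {r : ℕ}
    (hr : (1 / 2 : ℝ) ^ r ≤ ε) (hαr : α ≤ r + 1) (d : ℕ) :
    ∑ k : Fin (2 ^ d), ((k + 1 : ℝ) ^ (-α) -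
      dyadicTaylorApprox α (6 * r + 7) (min d (2 * r + 2)) k) ^ 2 ≤ ε ^ 2 := by
  set K := min d (2 * r + 2)
  have hE : 2 * (4 ^ ⌈α⌉₊ * (2 / 3 : ℝ) ^ (6 * r + 7)) ≤ ε / 2 := by
    have hn : ⌈α⌉₊ ≤ r + 1 := Nat.ceil_le.mpr (by exact_mod_cast hαr)
    calc 2 * (4 ^ ⌈α⌉₊ * (2 / 3 : ℝ) ^ (6 * r + 7))
        ≤ 2 * (4 ^ (r + 1) * (2 / 3 : ℝ) ^ (6 * r + 7)) := by gcongr; norm_num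
      _ = 8 * (2 / 3) ^ 7 * (4 * (2 / 3) ^ 6) ^ r := by
        rw [pow_succ, pow_add (2 / 3 : ℝ) (6 * r) 7, pow_mul, mul_pow]; ring
      _ ≤ 1 / 2 * (1 / 2) ^ r := by gcongr <;> norm_num
      _ ≤ ε / 2 := by linarith
  have hblocks : (2 * (4 ^ ⌈α⌉₊ * (2 / 3 : ℝ) ^ (6 * r + 7))) ^ 2 ≤ ε ^ 2 / 2 := by
    nlinarith [pow_le_pow_left₀ (by positivity) hE 2]
  rw [Fin.sum_univ_eq_sum_range
    (fun m => (((m : ℝ) + 1) ^ (-α) - dyadicTaylorApprox α (6 * r + 7) K m) ^ 2)]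
  have h₀ : ((0 : ℕ) + 1 : ℝ) ^ (-α) - dyadicTaylorApprox α (6 * r + 7) K 0 = 0 := by
    simp [dyadicTaylorApprox_zero]
  have h₁ := fun m (hm : m ∈ Ico 1 (2 ^ K)) => abs_sub_dyadicTaylorApprox_le hα (6 * r + 7) hm
  have hKd : 2 ^ K ≤ 2 ^ d := Nat.pow_le_pow_right two_pos (min_le_left _ _)
  rcases le_total d (2 * r + 2) with hd | hd
  · have hK : K = d := min_eq_left hd
    refine (sum_range_sq_le (c₂ := 0) Nat.one_le_two_pow hKd h₀ h₁ ?_).trans ?_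
    · simp [hK]
    · rw [zero_pow two_ne_zero, mul_zero, zero_div, add_zero]
      linarith [sq_nonneg ε]
  · have hK : K = 2 * r + 2 := min_eq_right hd
    refine (sum_range_sq_le (c₂ := 1) Nat.one_le_two_pow hKd h₀ h₁ fun m hm => ?_).trans ?_
    · have hm' : 2 ≤ (m : ℝ) + 1 := by
        have := Nat.one_le_two_pow.trans (mem_Ico.mp hm).1; norm_cast; omega
      rw [dyadicTaylorApprox_of_le (mem_Ico.mp hm).1, sub_zero, abs_of_pos (by positivity)]
      exact (rpow_neg_le_two_rpow_div hm' hα).trans <| by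
        gcongr
        exact rpow_le_one_of_one_le_of_nonpos one_le_two (by linarith)
    · have htail : 2 * 1 ^ 2 / ((2 ^ K : ℕ) + 1 : ℝ) ≤ ε ^ 2 / 2 := by
        have : ((1 / 2 : ℝ) ^ r) ^ 2 * 2 ^ K = 4 := by
          rw [hK, pow_add, pow_mul', ← mul_assoc, ← mul_pow, ← mul_pow (1 / 2 : ℝ)]; norm_num
        rw [div_le_iff₀ (by positivity)]
        push_cast
        nlinarith [mul_le_mul_of_nonneg_right (pow_le_pow_left₀ (by positivity) hr 2)
          (by positivity : (0 : ℝ) ≤ 2 ^ K)]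
      linarith

theorem sum_sq_sub_dyadicTaylorApprox_zero_le {α ε : ℝ} {r : ℕ} (hr : (1 / 2 : ℝ) ^ r ≤ ε)
    (hαr : r + 1 ≤ α) (p d : ℕ) :
    ∑ k : Fin (2 ^ d), ((k + 1 : ℝ) ^ (-α) - dyadicTaylorApprox α p 0 k) ^ 2 ≤ ε ^ 2 := by
  rw [Fin.sum_univ_eq_sum_range
    (fun m => (((m : ℝ) + 1) ^ (-α) - dyadicTaylorApprox α p 0 m) ^ 2)]
  refine (sum_range_sq_le (c₁ := 0) (c₂ := ε) le_rfl Nat.one_le_two_pow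
    (by simp [dyadicTaylorApprox_zero]) (by simp) fun m hm => ?_).trans (by norm_num)
  have hm' : 2 ≤ (m : ℝ) + 1 := by
    have := (mem_Ico.mp hm).1; norm_cast; omega
  rw [dyadicTaylorApprox_of_le (by simpa using (mem_Ico.mp hm).1), sub_zero,
    abs_of_pos (by positivity)]
  refine (rpow_neg_le_two_rpow_div hm' (by linarith [r.cast_nonneg (α := ℝ)])).trans ?_
  gcongr
  calc (2 : ℝ) ^ (1 - α) ≤ 2 ^ (-(r : ℝ)) :=
        rpow_le_rpow_of_exponent_le one_le_two (by linarith)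
    _ = (1 / 2) ^ r := by rw [rpow_neg zero_le_two, rpow_natCast, one_div, inv_pow]
    _ ≤ ε := hr

theorem exists_dyadicTaylorApprox_le {α ε : ℝ} (hα : 1 ≤ α) {r : ℕ} (hr : (1 / 2 : ℝ) ^ r ≤ ε)
    (d : ℕ) : ∃ p K : ℕ, K ≤ d ∧ p + 1 ≤ 6 * r + 8 ∧
      ∑ k : Fin (2 ^ d), ((k + 1 : ℝ) ^ (-α) - dyadicTaylorApprox α p K k) ^ 2 ≤ ε ^ 2 := by
  rcases le_total α (r + 1) with h | h
  · exact ⟨_, _, min_le_left _ _, le_rfl, sum_sq_sub_dyadicTaylorApprox_le_of_le hα hr h d⟩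
  · exact ⟨0, 0, Nat.zero_le _, by omega, sum_sq_sub_dyadicTaylorApprox_zero_le hr h 0 d⟩

theorem exists_half_pow_le {ε : ℝ} (hε₀ : 0 < ε) (hε₁ : ε < 1) :
    ∃ r : ℕ, (1 / 2 : ℝ) ^ r ≤ ε ∧ (r : ℝ) ≤ 2 * log (1 / ε) + 1 := by
  have hε' : 1 < 1 / ε := by rwa [one_div, one_lt_inv₀ hε₀]
  refine ⟨⌈logb 2 (1 / ε)⌉₊, ?_, ?_⟩
  · have h := (logb_le_iff_le_rpow one_lt_two (by positivity)).mp
      (Nat.le_ceil (logb 2 (1 / ε)))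
    rw [rpow_natCast, div_le_iff₀ hε₀] at h
    rw [div_pow, one_pow, div_le_iff₀ (by positivity)]
    linarith
  · have hlogb : logb 2 (1 / ε) ≤ 2 * log (1 / ε) := by
      rw [logb, div_le_iff₀ (log_pos one_lt_two)]
      nlinarith [log_two_gt_d9, log_pos hε']
    linarith [Nat.ceil_lt_add_one (logb_nonneg one_lt_two hε'.le)]

theorem one_le_norm_riemannZeta {α : ℝ} (hα : 1 < α) : 1 ≤ ‖riemannZeta α‖ := by
  have hsum : Summable fun n : ℕ => 1 / ((n : ℝ) + 1) ^ α := by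
    simpa using (summable_nat_add_iff 1).mpr (summable_one_div_nat_rpow.mpr hα)
  have hterm : ∀ n : ℕ, 1 / ((n : ℂ) + 1) ^ (α : ℂ) = ((1 / ((n : ℝ) + 1) ^ α : ℝ) : ℂ) := by
    intro n
    rw [show (n : ℂ) + 1 = ((n + 1 : ℝ) : ℂ) by push_cast; ring,
      ← Complex.ofReal_cpow (by positivity)]
    push_cast
    ring
  rw [zeta_eq_tsum_one_div_nat_add_one_cpow (by simpa using hα), tsum_congr hterm,
    ← Complex.ofReal_tsum, Complex.norm_real, norm_eq_abs]
  calc (1 : ℝ) = 1 / ((0 : ℕ) + 1 : ℝ) ^ α := by simp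
    _ ≤ ∑' n : ℕ, 1 / ((n : ℝ) + 1) ^ α := hsum.le_tsum 0 fun j _ => by positivity
    _ ≤ |∑' n : ℕ, 1 / ((n : ℝ) + 1) ^ α| := le_abs_self _

/-- Main theorem: for `f(k) = k^{-α}`, `α > 1`, there is an absolute constant `C > 0`
such that for all `ε ∈ (0,1)` and all `d`, the quantized tensor `Q(d,f)` of the vector
`(1^{-α}, …, (2^d)^{-α})` admits an approximation `T` with all TT-ranks at most
`C d (ln d + ln(1/ε) + ln ζ(α) + 1)` and `‖Q(d,f) - T‖_F ≤ ε`. -/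
theorem stmt_19 :
    ∃ C : ℝ, 0 < C ∧
      ∀ (α : ℝ), 1 < α → ∀ ε : ℝ, ε ∈ Set.Ioo (0 : ℝ) 1 → ∀ d : ℕ,
        ∃ T : Fin (2 ^ d) → ℝ,
          (∀ s : ℕ, 1 ≤ s → ∀ hs : s ≤ d - 1,
            ((unfolding s (le_trans hs (Nat.sub_le d 1)) T).rank : ℝ) ≤
              C * d * (Real.log d + Real.log (1 / ε) +
                Real.log ‖riemannZeta (α : ℂ)‖ + 1)) ∧
          Real.sqrt (∑ k : Fin (2 ^ d), ((k.1 + 1 : ℝ) ^ (-α) - T k) ^ 2) ≤ ε := by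
  refine ⟨15, by norm_num, fun α hα ε hε d => ?_⟩
  obtain ⟨r, hr, hrε⟩ := exists_half_pow_le hε.1 hε.2
  obtain ⟨p, K, hKd, hp, herr⟩ := exists_dyadicTaylorApprox_le hα.le hr d
  refine ⟨fun k => dyadicTaylorApprox α p K k, fun s hs₁ hs => ?_,
    (sqrt_le_sqrt herr).trans_eq (sqrt_sq hε.1.le)⟩
  have hd : (1 : ℝ) ≤ d := by exact_mod_cast (by omega : 1 ≤ d)
  have hrank : ((1 + K * (p + 1) : ℕ) : ℝ) ≤ 1 + d * (6 * r + 8) := by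
    have : (K : ℝ) * (p + 1) ≤ d * (6 * r + 8) :=
      mul_le_mul (by exact_mod_cast hKd) (by exact_mod_cast hp) (by positivity) (by positivity)
    push_cast
    linarith
  have hL : 0 ≤ log (1 / ε) := log_nonneg (by rw [one_div, one_le_inv₀ hε.1]; exact hε.2.le)
  have hlogd := log_nonneg hd
  have hζ := log_nonneg (one_le_norm_riemannZeta hα)
  refine (Nat.cast_le.mpr (rank_unfolding_dyadicTaylorApprox_le _ α p K)).trans
    (hrank.trans ?_)
  nlinarith
end
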